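/- arXiv:2201.02439 — 2 statements merged into one kernel-verified Lean document; each statement's English description precedes it below -/
import Mathlib

section
/- Let A, B be bounded selfadjoint operators on a complex Hilbert space H with B indefinite. Then I_≥(A,B) is nonempty if and only if ⟨Ax, x⟩ ≥ 0 for every x ∈ Q(B). -/
open scoped InnerProductSpace

noncomputable section

variable {H : Type*} [NormedAddCommGroup H] [InnerProductSpace ℂ H] [CompleteSpace H]

/-- The (real) quadratic form associated to an operator. -/
def qf (T : H →L[ℂ] H) (x : H) : ℝ := (⟪T x, x⟫_ℂ).re

/-- Positive semidefinite operator. -/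
def PosSemidef (T : H →L[ℂ] H) : Prop := ∀ x, 0 ≤ qf T x

/-- Positive definite operator (uniformly positive). -/
def PosDef (T : H →L[ℂ] H) : Prop := ∃ α > 0, ∀ x, α * ‖x‖ ^ 2 ≤ qf T x

/-- The set of parameters where the pencil `A + ρ B` is positive semidefinite. -/
def Ige (A B : H →L[ℂ] H) : Set ℝ := {ρ | PosSemidef (A + (ρ : ℂ) • B)}

/-- The set of parameters where the pencil `A + ρ B` is positive definite. -/
def Igt (A B : H →L[ℂ] H) : Set ℝ := {ρ | PosDef (A + (ρ : ℂ) • B)}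

/-- An operator is indefinite if its quadratic form takes both signs. -/
def Indefinite (T : H →L[ℂ] H) : Prop := (∃ x, 0 < qf T x) ∧ (∃ x, qf T x < 0)

/-! If `qf B x > 0 > qf B y`, put `s = √(-qf B y)` and pick `w` with `‖w‖ = √(qf B x)` whose phase
kills the cross term of `B`; then `s • x + w • y` and `s • x - w • y` are both `B`-neutral, and the
parallelogram law for `A` turns `0 ≤ qf A` on them into `0 ≤ -qf B y * qf A x + qf B x * qf A y`.
So every ratio `-qf A x / qf B x` on the positive cone of `B` lies below every ratio
`qf A y / -qf B y` on its negative cone, and any `ρ` between them, e.g. the supremum of the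
former, makes `A + ρ B` positive semidefinite. -/

theorem exists_forall_nonneg_add_mul_of_cross_nonneg {X : Type*} {f g : X → ℝ}
    (hzero : ∀ x, g x = 0 → 0 ≤ f x)
    (hcross : ∀ x y, 0 < g x → g y < 0 → 0 ≤ -g y * f x + g x * f y)
    (hpos : ∃ x, 0 < g x) (hneg : ∃ y, g y < 0) :
    ∃ ρ : ℝ, ∀ x, 0 ≤ f x + ρ * g x := by
  have : Nonempty {x // 0 < g x} := hpos.elim fun x hx => ⟨⟨x, hx⟩⟩
  have hsep : ∀ x y, 0 < g x → g y < 0 → -f x / g x ≤ f y / -g y := fun x y hx hy => by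
    rw [div_le_div_iff₀ hx (neg_pos.2 hy)]
    linarith [hcross x y hx hy]
  obtain ⟨y₀, hy₀⟩ := hneg
  have hbdd : BddAbove (Set.range fun x : {x // 0 < g x} => -f x / g x) :=
    ⟨f y₀ / -g y₀, Set.forall_mem_range.2 fun x => hsep x y₀ x.2 hy₀⟩
  refine ⟨⨆ x : {x // 0 < g x}, -f x / g x, fun x => ?_⟩
  rcases lt_trichotomy (g x) 0 with hx | hx | hx
  · have := ciSup_le fun z : {x // 0 < g x} => hsep z x z.2 hx
    rw [le_div_iff₀ (neg_pos.2 hx)] at this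
    linarith
  · simpa [hx] using hzero x hx
  · have := le_ciSup hbdd ⟨x, hx⟩
    rw [div_le_iff₀ hx] at this
    linarith

theorem Complex.exists_norm_eq_re_mul_eq_zero (c : ℂ) {r : ℝ} (hr : 0 ≤ r) :
    ∃ w : ℂ, ‖w‖ = r ∧ (w * c).re = 0 := by
  by_cases hc : c = 0
  · exact ⟨r, by simp [hr, hc]⟩
  · refine ⟨I * r * ‖c‖ / c, ?_, ?_⟩
    · simp [hr, hc]
    · rw [div_mul_cancel₀ _ hc]
      simp

section QuadraticForm

variable {E : Type*} [NormedAddCommGroup E] [InnerProductSpace ℂ E]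

theorem qf_smul (T : E →L[ℂ] E) (c : ℂ) (x : E) : qf T (c • x) = ‖c‖ ^ 2 * qf T x :=
  T.reApplyInnerSelf_smul x

theorem qf_add (T : E →L[ℂ] E) (x y : E) :
    qf T (x + y) = qf T x + qf T y + (⟪T x, y⟫_ℂ + ⟪T y, x⟫_ℂ).re := by
  simp only [qf, map_add, inner_add_left, inner_add_right, Complex.add_re]
  ring

theorem qf_add_add_qf_sub (T : E →L[ℂ] E) (x y : E) :
    qf T (x + y) + qf T (x - y) = 2 * qf T x + 2 * qf T y := by
  have h := qf_add T x (-y)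
  simp only [map_neg, inner_neg_left, inner_neg_right] at h
  rw [sub_eq_add_neg, h, qf_add, show qf T (-y) = qf T y by simp [qf]]
  simp only [Complex.add_re, Complex.neg_re]
  ring

theorem qf_add_ofReal_smul (A B : E →L[ℂ] E) (ρ : ℝ) (x : E) :
    qf (A + (ρ : ℂ) • B) x = qf A x + ρ * qf B x := by
  simp [qf]

theorem qf_ofReal_smul_add_smul (T : E →L[ℂ] E) (s : ℝ) (w : ℂ) (x y : E) :
    qf T ((s : ℂ) • x + w • y) = s ^ 2 * qf T x + ‖w‖ ^ 2 * qf T y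
      + s * (w * (⟪T x, y⟫_ℂ + ⟪x, T y⟫_ℂ)).re := by
  rw [qf_add, qf_smul, qf_smul, Complex.norm_real, Real.norm_eq_abs, sq_abs, map_smul, map_smul,
    inner_smul_left, inner_smul_right, inner_smul_left, inner_smul_right, Complex.conj_ofReal,
    ← inner_conj_symm x (T y)]
  simp only [Complex.add_re, Complex.add_im, Complex.mul_re, Complex.mul_im, Complex.conj_re,
    Complex.conj_im, Complex.ofReal_re, Complex.ofReal_im]
  ring

theorem exists_qf_add_eq_zero_and_qf_sub_eq_zero (B : E →L[ℂ] E) {x y : E}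
    (hx : 0 ≤ qf B x) (hy : qf B y ≤ 0) :
    ∃ (s : ℝ) (w : ℂ), s ^ 2 = -qf B y ∧ ‖w‖ ^ 2 = qf B x ∧
      qf B ((s : ℂ) • x + w • y) = 0 ∧ qf B ((s : ℂ) • x - w • y) = 0 := by
  obtain ⟨w, hw, hre⟩ :=
    Complex.exists_norm_eq_re_mul_eq_zero (⟪B x, y⟫_ℂ + ⟪x, B y⟫_ℂ) (Real.sqrt_nonneg (qf B x))
  have hs : √(-qf B y) ^ 2 = -qf B y := Real.sq_sqrt (neg_nonneg.2 hy)
  have hw : ‖w‖ ^ 2 = qf B x := by rw [hw, Real.sq_sqrt hx]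
  refine ⟨√(-qf B y), w, hs, hw, ?_, ?_⟩
  · rw [qf_ofReal_smul_add_smul, hs, hw, hre]
    ring
  · rw [sub_eq_add_neg, ← neg_smul, qf_ofReal_smul_add_smul, hs, norm_neg, hw, neg_mul w,
      Complex.neg_re, hre]
    ring

theorem qf_cross_nonneg_of_forall_qf_eq_zero {A B : E →L[ℂ] E}
    (h : ∀ z, qf B z = 0 → 0 ≤ qf A z) {x y : E} (hx : 0 ≤ qf B x) (hy : qf B y ≤ 0) :
    0 ≤ -qf B y * qf A x + qf B x * qf A y := by
  obtain ⟨s, w, hs, hw, h_add, h_sub⟩ := exists_qf_add_eq_zero_and_qf_sub_eq_zero B hx hy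
  have := qf_add_add_qf_sub A ((s : ℂ) • x) (w • y)
  rw [qf_smul, qf_smul, Complex.norm_real, Real.norm_eq_abs, sq_abs, hs, hw] at this
  linarith [h _ h_add, h _ h_sub]

end QuadraticForm

theorem stmt3_general (A B : H →L[ℂ] H)
    (hBind : Indefinite B) :
    (Ige A B).Nonempty ↔ ∀ x, qf B x = 0 → 0 ≤ qf A x := by
  constructor
  · rintro ⟨ρ, hρ⟩ x hx
    simpa only [qf_add_ofReal_smul, hx, mul_zero, add_zero] using hρ x
  · intro h
    obtain ⟨ρ, hρ⟩ := exists_forall_nonneg_add_mul_of_cross_nonneg h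
      (fun x y hx hy => qf_cross_nonneg_of_forall_qf_eq_zero h hx.le hy.le) hBind.1 hBind.2
    exact ⟨ρ, fun x => (qf_add_ofReal_smul A B ρ x).symm ▸ hρ x⟩

theorem stmt3 (A B : H →L[ℂ] H) (hA : IsSelfAdjoint A) (hB : IsSelfAdjoint B)
    (hBind : Indefinite B) :
    (Ige A B).Nonempty ↔ ∀ x, qf B x = 0 → 0 ≤ qf A x :=
  stmt3_general A B hBind
end
end

section
/- Let G be a bounded selfadjoint indefinite operator on a complex Hilbert space H, and suppose P₊, P₋, P₀ are orthogonal projections on H with P₊ + P₋ + P₀ = I, pairwise orthogonal ranges, each commuting with G, such that G∘P₀ = 0, ker G = range P₀, G∘P₊ is positive semidefinite and −G∘P₋ is positive semidefinite. Then I_≥(I,G) = [−‖G∘P₊‖⁻¹, ‖G∘P₋‖⁻¹] and I_>(I,G) = (−‖G∘P₊‖⁻¹, ‖G∘P₋‖⁻¹), where ‖·‖ is the operator norm. -/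
open scoped InnerProductSpace

noncomputable section

variable {H : Type*} [NormedAddCommGroup H] [InnerProductSpace ℂ H] [CompleteSpace H]

/-!
Write `G = A - B` with `A = G (1 - P₋) ≥ 0` and `B = -G P₋ ≥ 0`. For `ρ ≥ 0` we have
`1 + ρ G ≥ 1 - ρ B`, and in a C⋆-algebra a positive `a` satisfies `a ≤ 1 ↔ ‖a‖ ≤ 1`, so
`ρ ‖B‖ ≤ 1` suffices; conversely, compressing `1 + ρ G ≥ 0` to the range of `P₋` gives
`ρ B ≤ P₋ ≤ 1`. The case `ρ ≤ 0` is the same statement for `-G` and `1 - P₋`. Finally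
`1 + ρ G` is positive definite exactly when `1 + t ρ G` is positive semidefinite for some
`t > 1`, which turns the closed interval into the open one.
-/

open Filter Topology

lemma norm_mul_pos_of_not_nonneg {R : Type*} [NormedRing R] [PartialOrder R] {G P : R}
    (hG : ¬ 0 ≤ G) (hpos : 0 ≤ G * (1 - P)) : 0 < ‖G * P‖ := by
  rw [norm_pos_iff]
  intro h
  rw [mul_sub, mul_one, h, sub_zero] at hpos
  exact hG hpos

lemma one_add_smul_nonneg_iff {A : Type*} [CStarAlgebra A] [PartialOrder A] [StarOrderedRing A]
    {G P : A} (hP : IsStarProjection P) (hGP : Commute G P)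
    (hpos : 0 ≤ G * (1 - P)) (hneg : 0 ≤ -(G * P)) {ρ : ℝ} (hρ : 0 ≤ ρ) :
    0 ≤ 1 + ρ • G ↔ ρ * ‖G * P‖ ≤ 1 := by
  have hρB : 0 ≤ ρ • -(G * P) := smul_nonneg hρ hneg
  have hnorm : ‖ρ • -(G * P)‖ = ρ * ‖G * P‖ := by simp [norm_smul, hρ]
  rw [← hnorm, CStarAlgebra.norm_le_one_iff_of_nonneg _ hρB]
  constructor
  · intro h
    -- compressing to the range of `P` kills the positive part `G * (1 - P)`
    have hcomp : P * (1 + ρ • G) * P = P - ρ • -(G * P) := by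
      rw [mul_add, add_mul, mul_one, hP.isIdempotentElem.eq, mul_smul_comm, smul_mul_assoc,
        ← hGP.eq, mul_assoc, hP.isIdempotentElem.eq, smul_neg, sub_neg_eq_add]
    have h' := star_left_conjugate_nonneg h P
    rw [hP.isSelfAdjoint.star_eq, hcomp, sub_nonneg] at h'
    exact h'.trans hP.le_one
  · intro h
    have hsplit : 1 + ρ • G = (1 - ρ • -(G * P)) + ρ • (G * (1 - P)) := by
      rw [smul_neg, mul_sub, mul_one, smul_sub]; abel
    rw [hsplit]
    exact add_nonneg (sub_nonneg.mpr h) (smul_nonneg hρ hpos)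

lemma posSemidef_iff_nonneg {T : H →L[ℂ] H} (hT : IsSelfAdjoint T) : PosSemidef T ↔ 0 ≤ T := by
  rw [ContinuousLinearMap.nonneg_iff_isPositive, ContinuousLinearMap.isPositive_def']
  exact ⟨fun h => ⟨hT, h⟩, And.right⟩

omit [CompleteSpace H] in
lemma Indefinite.not_nonneg {G : H →L[ℂ] H} (hG : Indefinite G) : ¬ 0 ≤ G ∧ ¬ 0 ≤ -G := by
  simp only [ContinuousLinearMap.nonneg_iff_isPositive]
  obtain ⟨⟨x, hx⟩, ⟨y, hy⟩⟩ := hG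
  refine ⟨fun h => hy.not_ge (h.re_inner_nonneg_left y), fun h => hx.not_ge ?_⟩
  simpa [qf] using h.re_inner_nonneg_left x

omit [CompleteSpace H] in
lemma qf_one_add_smul (G : H →L[ℂ] H) (ρ : ℝ) (x : H) :
    qf (1 + (ρ : ℂ) • G) x = ‖x‖ ^ 2 + ρ * qf G x := by
  simp [qf, ← Complex.ofReal_pow]

lemma mem_Ige_one_iff_of_nonneg {G P : H →L[ℂ] H} (hG : IsSelfAdjoint G)
    (hP : IsStarProjection P) (hGP : Commute G P) (hpos : 0 ≤ G * (1 - P))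
    (hneg : 0 ≤ -(G * P)) (hGP_pos : 0 < ‖G * P‖) {ρ : ℝ} (hρ : 0 ≤ ρ) :
    ρ ∈ Ige 1 G ↔ ρ ≤ ‖G * P‖⁻¹ := by
  have hsa : IsSelfAdjoint (1 + (ρ : ℂ) • G) := .add (.one _) (.smul (Complex.conj_ofReal ρ) hG)
  rw [Ige, Set.mem_ofPred_eq, posSemidef_iff_nonneg hsa, Complex.coe_smul,
    one_add_smul_nonneg_iff hP hGP hpos hneg hρ, ← one_div, le_div_iff₀ hGP_pos]

omit [CompleteSpace H] in
lemma neg_mem_Ige_one_neg_iff {G : H →L[ℂ] H} {ρ : ℝ} : -ρ ∈ Ige 1 (-G) ↔ ρ ∈ Ige 1 G := by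
  simp [Ige]

lemma Indefinite.norm_mul_pos {G P : H →L[ℂ] H} (hind : Indefinite G)
    (hpos : 0 ≤ G * (1 - P)) (hneg : 0 ≤ -(G * P)) : 0 < ‖G * (1 - P)‖ ∧ 0 < ‖G * P‖ := by
  have hpos' : 0 ≤ -G * (1 - (1 - P)) := by simpa using hneg
  simpa using And.intro (norm_mul_pos_of_not_nonneg hind.not_nonneg.2 hpos')
    (norm_mul_pos_of_not_nonneg hind.not_nonneg.1 hpos)

lemma Ige_one_eq_Icc {G P : H →L[ℂ] H} (hG : IsSelfAdjoint G) (hind : Indefinite G)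
    (hP : IsStarProjection P) (hGP : Commute G P) (hpos : 0 ≤ G * (1 - P))
    (hneg : 0 ≤ -(G * P)) : Ige 1 G = Set.Icc (-‖G * (1 - P)‖⁻¹) ‖G * P‖⁻¹ := by
  obtain ⟨ha, hb⟩ := hind.norm_mul_pos hpos hneg
  ext ρ
  rcases le_total 0 ρ with hρ | hρ
  · rw [mem_Ige_one_iff_of_nonneg hG hP hGP hpos hneg hb hρ, Set.mem_Icc,
      and_iff_right ((neg_nonpos.mpr (inv_pos.mpr ha).le).trans hρ)]
  · rw [← neg_mem_Ige_one_neg_iff, mem_Ige_one_iff_of_nonneg hG.neg hP.one_sub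
      ((Commute.one_right G).sub_right hGP).neg_left (by simpa using hneg) (by simpa using hpos)
      (by simpa using ha) (neg_nonneg.mpr hρ),
      neg_mul, norm_neg, Set.mem_Icc, neg_le, and_iff_left (hρ.trans (inv_pos.mpr hb).le)]

omit [CompleteSpace H] in
lemma Igt_one_eq (G : H →L[ℂ] H) : Igt 1 G = {ρ | ∃ t > 1, t * ρ ∈ Ige 1 G} := by
  ext ρ
  simp only [Igt, Ige, PosDef, PosSemidef, Set.mem_ofPred_eq, qf_one_add_smul]
  constructor
  · rintro ⟨α, hα, h⟩
    refine ⟨1 + α, by linarith, fun x => ?_⟩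
    -- with `s = ‖x‖² + ρ q ≥ α ‖x‖²`: `‖x‖² + (1 + α) ρ q = (1 + α) s - α ‖x‖² ≥ α² ‖x‖²`
    nlinarith [mul_le_mul_of_nonneg_left (h x) (by linarith : 0 ≤ 1 + α),
      mul_nonneg (mul_nonneg hα.le hα.le) (sq_nonneg ‖x‖)]
  · rintro ⟨t, ht, h⟩
    have ht₀ : 0 < t := zero_lt_one.trans ht
    refine ⟨1 - t⁻¹, sub_pos.mpr (inv_lt_one_of_one_lt₀ ht), fun x => ?_⟩
    have hsplit : ‖x‖ ^ 2 + ρ * qf G x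
        = (1 - t⁻¹) * ‖x‖ ^ 2 + t⁻¹ * (‖x‖ ^ 2 + t * ρ * qf G x) := by
      field_simp
      ring
    rw [hsplit]
    exact le_add_of_nonneg_right (mul_nonneg (inv_nonneg.mpr ht₀.le) (h x))

lemma exists_one_lt_mul_mem_Icc_iff {a b ρ : ℝ} (ha : 0 < a) (hb : 0 < b) :
    (∃ t > 1, t * ρ ∈ Set.Icc (-a) b) ↔ ρ ∈ Set.Ioo (-a) b := by
  constructor
  · rintro ⟨t, ht, h₁, h₂⟩
    constructor <;> nlinarith
  · intro h
    have hlim : Tendsto (fun t : ℝ => t * ρ) (𝓝[>] 1) (𝓝 ρ) := by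
      simpa using ((tendsto_id (x := 𝓝 (1 : ℝ))).mul_const ρ).mono_left nhdsWithin_le_nhds
    obtain ⟨t, ht, ht'⟩ := ((hlim.eventually (Ioo_mem_nhds h.1 h.2)).and self_mem_nhdsWithin).exists
    exact ⟨t, ht', Set.Ioo_subset_Icc_self ht⟩

theorem stmt18_general (G Pp Pm P0 : H →L[ℂ] H)
    (hG : IsSelfAdjoint G) (hGind : Indefinite G)
    (hPm : IsIdempotentElem Pm ∧ IsSelfAdjoint Pm)
    (hsum : Pp + Pm + P0 = 1)
    (hcomm : Commute G Pp ∧ Commute G Pm ∧ Commute G P0)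
    (hGP0 : G ∘L P0 = 0)
    (hpos : PosSemidef (G ∘L Pp)) (hneg : PosSemidef (-(G ∘L Pm))) :
    Ige 1 G = Set.Icc (-‖G ∘L Pp‖⁻¹) ‖G ∘L Pm‖⁻¹ ∧
    Igt 1 G = Set.Ioo (-‖G ∘L Pp‖⁻¹) ‖G ∘L Pm‖⁻¹ := by
  have hP : IsStarProjection Pm := ⟨hPm.1, hPm.2⟩
  have hGPp : G * (1 - Pm) = G ∘L Pp := by
    rw [← hsum, add_right_comm, add_sub_cancel_right, mul_add]
    exact add_eq_left.mpr hGP0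
  have hpos' : 0 ≤ G * (1 - Pm) := by
    refine (posSemidef_iff_nonneg ?_).mp (hGPp ▸ hpos)
    exact (hG.commute_iff hP.one_sub.isSelfAdjoint).mp ((Commute.one_right G).sub_right hcomm.2.1)
  have hneg' : 0 ≤ -(G * Pm) :=
    (posSemidef_iff_nonneg ((hG.commute_iff hP.isSelfAdjoint).mp hcomm.2.1).neg).mp hneg
  obtain ⟨ha, hb⟩ := hGind.norm_mul_pos hpos' hneg'
  have hIge := Ige_one_eq_Icc hG hGind hP hcomm.2.1 hpos' hneg'
  rw [hGPp] at hIge ha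
  refine ⟨hIge, ?_⟩
  ext ρ
  rw [Igt_one_eq, Set.mem_ofPred_eq, hIge]
  exact exists_one_lt_mul_mem_Icc_iff (inv_pos.mpr ha) (inv_pos.mpr hb)

theorem stmt18 (G Pp Pm P0 : H →L[ℂ] H)
    (hG : IsSelfAdjoint G) (hGind : Indefinite G)
    (hPp : IsIdempotentElem Pp ∧ IsSelfAdjoint Pp)
    (hPm : IsIdempotentElem Pm ∧ IsSelfAdjoint Pm)
    (hP0 : IsIdempotentElem P0 ∧ IsSelfAdjoint P0)
    (hsum : Pp + Pm + P0 = 1)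
    (horth : Pp ∘L Pm = 0 ∧ Pp ∘L P0 = 0 ∧ Pm ∘L P0 = 0)
    (hcomm : Commute G Pp ∧ Commute G Pm ∧ Commute G P0)
    (hGP0 : G ∘L P0 = 0)
    (hker : LinearMap.ker (G : H →ₗ[ℂ] H) = LinearMap.range (P0 : H →ₗ[ℂ] H))
    (hpos : PosSemidef (G ∘L Pp)) (hneg : PosSemidef (-(G ∘L Pm))) :
    Ige 1 G = Set.Icc (-‖G ∘L Pp‖⁻¹) ‖G ∘L Pm‖⁻¹ ∧
    Igt 1 G = Set.Ioo (-‖G ∘L Pp‖⁻¹) ‖G ∘L Pm‖⁻¹ :=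
  stmt18_general G Pp Pm P0 hG hGind hPm hsum hcomm hGP0 hpos hneg
end
end
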